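/- For every n with 2 ≤ n ≤ N, the polynomial Ĉ′_n := ∑_{i=0}^{n} ∑_{k=0}^{n−i} ((−1)^k/(n−i)!) · s(n−i, k) · x_i · x_1^k · x_0^{n−k} ∈ ℚ[x_0,…,x_N] lies in the kernel of the second Kravchuk derivation: D_{K2}(Ĉ′_n) = 0. (Ĉ′_n equals x_0 times the Cayley element of D_{K2} obtained from the Dixmier map.) -/
import Mathlib


/-- The variable `x_i` of `ℚ[x_0,…,x_N]` (for `i ≤ N`). -/
noncomputable def Xv (N : ℕ) (i : ℕ) : MvPolynomial (Fin (N + 1)) ℚ :=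
  if h : i ≤ N then MvPolynomial.X ⟨i, Nat.lt_succ_of_le h⟩ else 0

/-- The second Kravchuk derivation: `D_{K2}(x_0)=0`,
`D_{K2}(x_m)=∑_{i=0}^{m-1} ((-1)^{m+1+i}/(m-i)) x_i`. -/
noncomputable def DK2 (N : ℕ) :
    Derivation ℚ (MvPolynomial (Fin (N + 1)) ℚ) (MvPolynomial (Fin (N + 1)) ℚ) :=
  MvPolynomial.mkDerivation ℚ fun m : Fin (N + 1) =>
    ∑ i ∈ Finset.range (m : ℕ),
      MvPolynomial.C ((-1 : ℚ) ^ ((m : ℕ) + 1 + i) / (((m : ℕ) : ℚ) - (i : ℚ))) * Xv N i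

/-- Signed Stirling numbers of the first kind: `t(t-1)⋯(t-m+1) = ∑_k s(m,k) t^k`. -/
noncomputable def stirling1 (m k : ℕ) : ℚ := (descPochhammer ℚ m).coeff k

lemma DXv (N i : ℕ) (hi : i ≤ N) :
    DK2 N (Xv N i) =
      ∑ j ∈ Finset.range i,
        MvPolynomial.C ((-1 : ℚ) ^ (i + 1 + j) / ((i : ℚ) - (j : ℚ))) * Xv N j := by
  rw [Xv, dif_pos hi, DK2, MvPolynomial.mkDerivation_X]

lemma DXv0 (N : ℕ) : DK2 N (Xv N 0) = 0 := by
  rw [DXv N 0 (Nat.zero_le N)]; simp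

lemma DXv1 (N : ℕ) (hN : 1 ≤ N) : DK2 N (Xv N 1) = Xv N 0 := by
  rw [DXv N 1 hN]
  norm_num

lemma D_term (N : ℕ) (hN : 1 ≤ N) (c : ℚ) (i k l : ℕ) :
    DK2 N (MvPolynomial.C c * Xv N i * Xv N 1 ^ k * Xv N 0 ^ l)
      = MvPolynomial.C c * (DK2 N (Xv N i) * (Xv N 1 ^ k * Xv N 0 ^ l))
        + MvPolynomial.C (c * k) * (Xv N i * (Xv N 1 ^ (k - 1) * Xv N 0 ^ (l + 1))) := by
  have e : MvPolynomial.C c * Xv N i * Xv N 1 ^ k * Xv N 0 ^ l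
      = c • (Xv N i * (Xv N 1 ^ k * Xv N 0 ^ l)) := by
    rw [MvPolynomial.smul_eq_C_mul]; ring
  rw [e, Derivation.map_smul, Derivation.leibniz, Derivation.leibniz,
    Derivation.leibniz_pow, Derivation.leibniz_pow, DXv0, DXv1 N hN]
  simp only [smul_eq_mul, nsmul_eq_mul, smul_zero, mul_zero, zero_mul, add_zero, zero_add,
    map_mul, map_natCast, MvPolynomial.smul_eq_C_mul]
  ring

lemma swap_sum {β : Type*} [AddCommMonoid β] (M : ℕ) (g : ℕ → ℕ → β) :
    ∑ i ∈ Finset.range M, ∑ j ∈ Finset.range i, g i j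
      = ∑ j ∈ Finset.range M, ∑ i ∈ Finset.Ico (j + 1) M, g i j := by
  have h1 : ∀ i ∈ Finset.range M,
      ∑ j ∈ Finset.range i, g i j = ∑ j ∈ Finset.range M, if j < i then g i j else 0 := by
    intro i hi
    simp only [Finset.mem_range] at hi
    rw [← Finset.sum_filter]
    congr 1
    ext j
    simp only [Finset.mem_filter, Finset.mem_range]
    omega
  rw [Finset.sum_congr rfl h1, Finset.sum_comm]
  apply Finset.sum_congr rfl
  intro j _
  rw [← Finset.sum_filter]
  congr 1
  ext i
  simp only [Finset.mem_filter, Finset.mem_range, Finset.mem_Ico]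
  omega

lemma stir_high {m k : ℕ} (h : m < k) : stirling1 m k = 0 := by
  apply Polynomial.coeff_eq_zero_of_natDegree_lt; simpa [stirling1]

section
open Polynomial Finset

lemma key_poly (m : ℕ) :
    derivative (descPochhammer ℚ m) =
      ∑ d ∈ Finset.range m,
        Polynomial.C ((-1:ℚ)^d * m.factorial / ((d+1) * (m-d-1).factorial))
          * descPochhammer ℚ (m-d-1) := by
  induction m with
  | zero => simp [descPochhammer]
  | succ m ih =>
    rw [descPochhammer_succ_right, derivative_mul, ih, derivative_sub, derivative_X,
      derivative_natCast, Finset.sum_range_succ]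
    set h : ℕ → ℚ[X] := fun e =>
      Polynomial.C ((-1:ℚ)^(e+1) * m.factorial / (m-e).factorial) * descPochhammer ℚ (m-e)
      with hh
    have tel : ∑ e ∈ Finset.range m, (h (e+1) - h e) = h m - h 0 := Finset.sum_range_sub h m
    have per : ∀ e ∈ Finset.range m,
        Polynomial.C ((-1:ℚ)^e * (m+1).factorial / ((e+1) * (m+1-e-1).factorial))
            * descPochhammer ℚ (m+1-e-1)
          - Polynomial.C ((-1:ℚ)^e * m.factorial / ((e+1) * (m-e-1).factorial))
            * descPochhammer ℚ (m-e-1) * (X - (m:ℚ[X]))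
        = h (e+1) - h e := by
      intro e he
      simp only [Finset.mem_range] at he
      obtain ⟨j, hj⟩ : ∃ j, m = e + j + 1 := ⟨m - e - 1, by omega⟩
      subst hj
      have h1 : e + j + 1 + 1 - e - 1 = j + 1 := by omega
      have h2 : e + j + 1 - e = j + 1 := by omega
      have h3 : e + j + 1 - e - 1 = j := by omega
      have h4 : e + j + 1 - (e + 1) = j := by omega
      rw [h1, h3]
      simp only [hh, h4, h2]
      rw [descPochhammer_succ_right]
      have main : Polynomial.C ((-1:ℚ)^e * (e+j+1+1).factorial / ((e+1) * (j+1).factorial))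
            * (X - (j:ℚ[X]))
          - Polynomial.C ((-1:ℚ)^e * (e+j+1).factorial / ((e+1) * j.factorial))
            * (X - ((e+j+1 : ℕ):ℚ[X]))
          = Polynomial.C ((-1:ℚ)^(e+1+1) * (e+j+1).factorial / j.factorial)
          - Polynomial.C ((-1:ℚ)^(e+1) * (e+j+1).factorial / (j+1).factorial)
            * (X - (j:ℚ[X])) := by
        apply Polynomial.funext
        intro x
        have f1 : ((j+1).factorial : ℚ) = (j+1) * j.factorial := by
          rw [Nat.factorial_succ]; push_cast; ring
        have f2 : ((e+j+1+1).factorial : ℚ) = (e+j+1+1) * (e+j+1).factorial := by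
          rw [Nat.factorial_succ]; push_cast; ring
        have n1 : (j.factorial : ℚ) ≠ 0 := by positivity
        have n2 : ((e+j+1).factorial : ℚ) ≠ 0 := by positivity
        have n3 : ((e:ℚ)+1) ≠ 0 := by positivity
        have n4 : ((j:ℚ)+1) ≠ 0 := by positivity
        simp only [eval_sub, eval_mul, eval_C, eval_X, eval_natCast, f1, f2]
        push_cast
        field_simp
        ring
      linear_combination (descPochhammer ℚ j) * main
    have tel2 : (∑ e ∈ Finset.range m,
          Polynomial.C ((-1:ℚ)^e * (m+1).factorial / ((e+1) * (m+1-e-1).factorial))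
            * descPochhammer ℚ (m+1-e-1))
        - (∑ e ∈ Finset.range m,
          Polynomial.C ((-1:ℚ)^e * m.factorial / ((e+1) * (m-e-1).factorial))
            * descPochhammer ℚ (m-e-1)) * (X - (m:ℚ[X]))
        = h m - h 0 := by
      rw [Finset.sum_mul, ← Finset.sum_sub_distrib]
      rw [← tel]
      exact Finset.sum_congr rfl per
    have e1 : h m = Polynomial.C ((-1:ℚ)^(m+1) * m.factorial) := by
      simp [hh, Nat.sub_self, descPochhammer_zero]
    have e2 : h 0 = -descPochhammer ℚ m := by
      simp only [hh, Nat.sub_zero]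
      rw [mul_div_assoc, div_self (by positivity : ((m.factorial:ℚ)) ≠ 0), mul_one]
      norm_num
    have cc : Polynomial.C ((-1:ℚ)^m * (m+1).factorial/(((m:ℚ)+1) * ((0:ℕ).factorial)))
        = - Polynomial.C ((-1:ℚ)^(m+1) * m.factorial) := by
      rw [← map_neg]
      congr 1
      rw [Nat.factorial_succ]
      push_cast
      field_simp
      ring
    rw [e1, e2] at tel2
    rw [show m+1-m-1 = 0 from by omega, descPochhammer_zero, cc, mul_one]
    linear_combination - tel2

lemma key_coeff (m a : ℕ) :
    stirling1 m (a+1) * (a+1) =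
      ∑ d ∈ Finset.range m,
        (-1:ℚ)^d * m.factorial / ((d+1) * (m-d-1).factorial) * stirling1 (m-d-1) a := by
  have h := congrArg (fun p : Polynomial ℚ => p.coeff a) (key_poly m)
  simpa [stirling1, Polynomial.coeff_derivative, Polynomial.finset_sum_coeff,
    Polynomial.coeff_C_mul] using h

end

lemma coef_zero (n j a : ℕ) (hj : j ≤ n) :
    (∑ d ∈ Finset.range (n-j),
          ((-1:ℚ)^a / (n-(j+1+d)).factorial * stirling1 (n-(j+1+d)) a)
            * ((-1:ℚ)^((j+1+d) + 1 + j) / (((j+1+d : ℕ) : ℚ) - (j : ℚ))))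
      + ((-1:ℚ)^(a+1) / (n-j).factorial * stirling1 (n-j) (a+1)) * ((a+1 : ℕ) : ℚ) = 0 := by
  set m := n - j with hm
  have hs : ∀ d ∈ Finset.range m,
      ((-1:ℚ)^a / (n-(j+1+d)).factorial * stirling1 (n-(j+1+d)) a)
          * ((-1:ℚ)^((j+1+d) + 1 + j) / (((j+1+d : ℕ) : ℚ) - (j : ℚ)))
        = (-(-1:ℚ)^(a+1)/m.factorial)
            * ((-1:ℚ)^d * m.factorial / ((d+1) * (m-d-1).factorial) * stirling1 (m-d-1) a) := by
    intro d hd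
    simp only [Finset.mem_range] at hd
    have h1 : n - (j+1+d) = m - d - 1 := by omega
    have h2 : (-1:ℚ)^((j+1+d) + 1 + j) = (-1:ℚ)^d := by
      rw [show (j+1+d) + 1 + j = d + 2*(j+1) by ring, pow_add, pow_mul, neg_one_sq, one_pow,
        mul_one]
    have h3 : (((j+1+d : ℕ) : ℚ) - (j : ℚ)) = (d:ℚ) + 1 := by push_cast; ring
    rw [h1, h2, h3]
    have n1 : ((m.factorial : ℚ)) ≠ 0 := by positivity
    have n2 : (((m-d-1).factorial : ℚ)) ≠ 0 := by positivity
    have n3 : ((d:ℚ) + 1) ≠ 0 := by positivity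
    field_simp
    ring
  rw [Finset.sum_congr rfl hs, ← Finset.mul_sum, ← key_coeff m a]
  push_cast
  ring

/-- The (normalized) Cayley element
`Ĉ′_n = ∑_{i=0}^n ∑_{k=0}^{n-i} ((-1)^k/(n-i)!) s(n-i,k) x_i x_1^k x_0^{n-k}`. -/
noncomputable def Chat' (N n : ℕ) : MvPolynomial (Fin (N + 1)) ℚ :=
  ∑ i ∈ Finset.range (n + 1), ∑ k ∈ Finset.range (n - i + 1),
    MvPolynomial.C ((-1 : ℚ) ^ k / (Nat.factorial (n - i)) * stirling1 (n - i) k)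
      * Xv N i * (Xv N 1) ^ k * (Xv N 0) ^ (n - k)

/-- For `2 ≤ n ≤ N` the Cayley element `Ĉ′_n` lies in the kernel of `D_{K2}`. -/
theorem DK2_Chat'_eq_zero (N n : ℕ) (h2 : 2 ≤ n) (hn : n ≤ N) :
    DK2 N (Chat' N n) = 0 := by
  have hN1 : 1 ≤ N := le_trans (le_trans one_le_two h2) hn
  have exp1 : DK2 N (Chat' N n) =
      (∑ i ∈ Finset.range (n+1), ∑ k ∈ Finset.range (n-i+1),
        MvPolynomial.C ((-1:ℚ)^k / (n-i).factorial * stirling1 (n-i) k)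
          * (DK2 N (Xv N i) * (Xv N 1 ^ k * Xv N 0 ^ (n-k))))
    + (∑ i ∈ Finset.range (n+1), ∑ k ∈ Finset.range (n-i+1),
        MvPolynomial.C (((-1:ℚ)^k / (n-i).factorial * stirling1 (n-i) k) * k)
          * (Xv N i * (Xv N 1 ^ (k-1) * Xv N 0 ^ (n-k+1)))) := by
    rw [Chat', map_sum, ← Finset.sum_add_distrib]
    apply Finset.sum_congr rfl; intro i hi
    rw [map_sum, ← Finset.sum_add_distrib]
    apply Finset.sum_congr rfl; intro k hk
    exact D_term N hN1 _ i k (n-k)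
  have hA : (∑ i ∈ Finset.range (n+1), ∑ k ∈ Finset.range (n-i+1),
        MvPolynomial.C ((-1:ℚ)^k / (n-i).factorial * stirling1 (n-i) k)
          * (DK2 N (Xv N i) * (Xv N 1 ^ k * Xv N 0 ^ (n-k))))
      = ∑ j ∈ Finset.range (n+1), ∑ a ∈ Finset.range (n+1), ∑ d ∈ Finset.range (n-j),
          MvPolynomial.C (((-1:ℚ)^a / (n-(j+1+d)).factorial * stirling1 (n-(j+1+d)) a)
              * ((-1:ℚ)^((j+1+d) + 1 + j) / (((j+1+d : ℕ) : ℚ) - (j : ℚ))))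
            * (Xv N j * (Xv N 1 ^ a * Xv N 0 ^ (n-a))) := by
    have A1 : ∀ i ∈ Finset.range (n+1), ∀ k ∈ Finset.range (n-i+1),
        MvPolynomial.C ((-1:ℚ)^k / (n-i).factorial * stirling1 (n-i) k)
            * (DK2 N (Xv N i) * (Xv N 1 ^ k * Xv N 0 ^ (n-k)))
          = ∑ j ∈ Finset.range i,
              MvPolynomial.C (((-1:ℚ)^k / (n-i).factorial * stirling1 (n-i) k)
                  * ((-1:ℚ)^(i + 1 + j) / ((i : ℚ) - (j : ℚ))))
                * (Xv N j * (Xv N 1 ^ k * Xv N 0 ^ (n-k))) := by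
      intro i hi k hk
      simp only [Finset.mem_range] at hi
      rw [DXv N i (by omega), Finset.sum_mul, Finset.mul_sum]
      apply Finset.sum_congr rfl; intro j hj
      simp only [map_mul, map_div₀, map_pow, map_neg, map_one, map_natCast, map_sub, map_inv₀]
      ring
    rw [Finset.sum_congr rfl (fun i hi => Finset.sum_congr rfl (A1 i hi))]
    -- swap k and j (inner)
    rw [Finset.sum_congr rfl (fun i _ => Finset.sum_comm)]
    -- extend k range to range (n+1)
    have A3 : ∀ i ∈ Finset.range (n+1), ∀ j ∈ Finset.range i,
        ∑ k ∈ Finset.range (n-i+1),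
            MvPolynomial.C (((-1:ℚ)^k / (n-i).factorial * stirling1 (n-i) k)
                * ((-1:ℚ)^(i + 1 + j) / ((i : ℚ) - (j : ℚ))))
              * (Xv N j * (Xv N 1 ^ k * Xv N 0 ^ (n-k)))
          = ∑ k ∈ Finset.range (n+1),
            MvPolynomial.C (((-1:ℚ)^k / (n-i).factorial * stirling1 (n-i) k)
                * ((-1:ℚ)^(i + 1 + j) / ((i : ℚ) - (j : ℚ))))
              * (Xv N j * (Xv N 1 ^ k * Xv N 0 ^ (n-k))) := by
      intro i _ j _
      apply Finset.sum_subset (Finset.range_subset_range.mpr (by omega))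
      intro k _ hk
      simp only [Finset.mem_range] at hk
      rw [stir_high (by omega)]
      norm_num
    rw [Finset.sum_congr rfl (fun i hi => Finset.sum_congr rfl (A3 i hi))]
    rw [swap_sum]
    apply Finset.sum_congr rfl; intro j hj
    simp only [Finset.mem_range] at hj
    rw [Finset.sum_Ico_eq_sum_range]
    rw [show n + 1 - (j+1) = n - j by omega]
    rw [Finset.sum_comm]
  have hB : (∑ i ∈ Finset.range (n+1), ∑ k ∈ Finset.range (n-i+1),
        MvPolynomial.C (((-1:ℚ)^k / (n-i).factorial * stirling1 (n-i) k) * k)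
          * (Xv N i * (Xv N 1 ^ (k-1) * Xv N 0 ^ (n-k+1))))
      = ∑ j ∈ Finset.range (n+1), ∑ a ∈ Finset.range (n+1),
          MvPolynomial.C (((-1:ℚ)^(a+1) / (n-j).factorial * stirling1 (n-j) (a+1))
              * ((a+1 : ℕ) : ℚ))
            * (Xv N j * (Xv N 1 ^ a * Xv N 0 ^ (n-a))) := by
    apply Finset.sum_congr rfl; intro j hj
    simp only [Finset.mem_range] at hj
    rw [Finset.sum_range_succ']
    have B0 : MvPolynomial.C (((-1:ℚ)^0 / (n-j).factorial * stirling1 (n-j) 0) * (0:ℕ))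
        * (Xv N j * (Xv N 1 ^ (0-1) * Xv N 0 ^ (n-0+1))) = 0 := by
      norm_num
    rw [B0, add_zero]
    have B2 : ∀ a ∈ Finset.range (n-j),
        MvPolynomial.C (((-1:ℚ)^(a+1) / (n-j).factorial * stirling1 (n-j) (a+1)) * ((a+1:ℕ)))
            * (Xv N j * (Xv N 1 ^ (a+1-1) * Xv N 0 ^ (n-(a+1)+1)))
          = MvPolynomial.C (((-1:ℚ)^(a+1) / (n-j).factorial * stirling1 (n-j) (a+1))
              * ((a+1 : ℕ) : ℚ))
            * (Xv N j * (Xv N 1 ^ a * Xv N 0 ^ (n-a))) := by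
      intro a ha
      simp only [Finset.mem_range] at ha
      rw [show a+1-1 = a by omega, show n-(a+1)+1 = n-a by omega]
    rw [Finset.sum_congr rfl B2]
    apply Finset.sum_subset (Finset.range_subset_range.mpr (by omega))
    intro a _ ha
    simp only [Finset.mem_range] at ha
    rw [stir_high (by omega)]
    norm_num
  rw [exp1, hA, hB, ← Finset.sum_add_distrib]
  apply Finset.sum_eq_zero; intro j hj
  simp only [Finset.mem_range] at hj
  rw [← Finset.sum_add_distrib]
  apply Finset.sum_eq_zero; intro a _
  rw [← Finset.sum_mul, ← map_sum, ← add_mul, ← map_add, coef_zero n j a (by omega), map_zero,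
    zero_mul]
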